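/- Let d, D be positive integers, let (a_n)_{n∈ℕ} be nonnegative reals with ∑_{n=0}^∞ a_n < ∞, and for t = 1, …, D let φ_t be independent copies of the random Maclaurin feature φ(x) = √(a_N · 2^{N+1}) · ∏_{j=1}^N ⟨ω_j, x⟩ (each copy with its own independent N with P[N = n] = 2^{−(n+1)} and its own i.i.d. Rademacher vectors ω_j uniform on {−1,1}^d). Define Φ(x) = D^{−1/2}(φ_1(x), …, φ_D(x)) ∈ ℝ^D. Then for all x, y ∈ ℝ^d with ‖x‖₂ ≤ 1 and ‖y‖₂ ≤ 1, E[Φ(x) · Φ(y)] = ∑_{n=0}^∞ a_n ⟨x, y⟩^n, i.e., the inner product of the D-dimensional random feature maps is an unbiased estimator of the dot-product kernel K(x·y) = ∑ a_n (x·y)^n. -/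

import Mathlib

open MeasureTheory ProbabilityTheory

/-- The sign vector in `ℝ^d` associated to a Boolean vector. -/
noncomputable def signVec (d : ℕ) (b : Fin d → Bool) : EuclideanSpace ℝ (Fin d) :=
  WithLp.toLp 2 (fun i => if b i then (1 : ℝ) else -1)

/-- The uniform distribution on `{-1, 1}^d ⊆ ℝ^d` (a Rademacher random vector). -/
noncomputable def rademacherMeasure (d : ℕ) : Measure (EuclideanSpace ℝ (Fin d)) :=
  Measure.map (signVec d) (PMF.uniformOfFintype (Fin d → Bool)).toMeasure

/-!
Conditioning on the event `N = n`, which is independent of the `ω j`, and then using the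
independence of the `ω j`, the `n`-th term of `E[φ(x) φ(y)]` is
`2^{-(n+1)} · a n 2^{n+1} · (E ⟪ω, x⟫⟪ω, y⟫)^n = a n ⟪x, y⟫^n`, because a Rademacher vector is
isotropic. The exchange of sum and expectation is justified by the same computation with absolute
values, which bounds the `n`-th term by `a n (E |⟪ω, x⟫⟪ω, y⟫|)^n ≤ a n (‖x‖² + ‖y‖²)/2 ≤ a n`.
Each of the `D` coordinates of `Φ` then contributes `1/D` of the kernel.
-/

open Finset
open scoped RealInnerProductSpace

section Rademacher

variable {d : ℕ}

lemma measurable_signVec : Measurable (signVec d) :=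
  (WithLp.measurable_toLp 2 _).comp <| measurable_pi_lambda _ fun i =>
    (measurable_of_countable fun c : Bool => if c then (1 : ℝ) else -1).comp
      (measurable_pi_apply i)

instance isProbabilityMeasure_rademacherMeasure : IsProbabilityMeasure (rademacherMeasure d) :=
  Measure.isProbabilityMeasure_map measurable_signVec.aemeasurable

lemma integrable_rademacherMeasure {g : EuclideanSpace ℝ (Fin d) → ℝ} (hg : Measurable g) :
    Integrable g (rademacherMeasure d) :=
  (integrable_map_measure hg.aestronglyMeasurable measurable_signVec.aemeasurable).2 .of_finite

lemma integral_rademacherMeasure_eq_sum {g : EuclideanSpace ℝ (Fin d) → ℝ} (hg : Measurable g) :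
    ∫ v, g v ∂rademacherMeasure d = ((2 : ℝ) ^ d)⁻¹ * ∑ b, g (signVec d b) := by
  rw [rademacherMeasure, integral_map measurable_signVec.aemeasurable hg.aestronglyMeasurable,
    PMF.integral_eq_sum, mul_sum]
  simp

lemma sum_sign_mul_sign (i i' : Fin d) :
    ∑ b : Fin d → Bool, (if b i then (1 : ℝ) else -1) * (if b i' then (1 : ℝ) else -1) =
      if i = i' then 2 ^ d else 0 := by
  split_ifs with h
  · subst h
    simp [apply_ite (fun r : ℝ => r * r)]
  -- flipping the `i`-th sign pairs off the terms with opposite values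
  refine sum_involution (fun b _ => Function.update b i (!b i)) (fun b _ => ?_)
    (fun b _ _ hb => by simpa using congrFun hb i) (fun _ _ => mem_univ _) (fun b _ => ?_)
  · rw [Function.update_self, Function.update_of_ne (Ne.symm h)]
    cases b i <;> cases b i' <;> norm_num
  · simp

lemma inner_signVec (b : Fin d → Bool) (x : EuclideanSpace ℝ (Fin d)) :
    ⟪signVec d b, x⟫ = ∑ i, (if b i then (1 : ℝ) else -1) * x i := by
  simp [PiLp.inner_apply, signVec, mul_comm]

theorem integral_inner_mul_inner_rademacherMeasure (x y : EuclideanSpace ℝ (Fin d)) :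
    ∫ v, ⟪v, x⟫ * ⟪v, y⟫ ∂rademacherMeasure d = ⟪x, y⟫ := by
  rw [integral_rademacherMeasure_eq_sum (by fun_prop)]
  have hsum : ∑ b : Fin d → Bool, ⟪signVec d b, x⟫ * ⟪signVec d b, y⟫ = 2 ^ d * ⟪x, y⟫ := by
    simp_rw [inner_signVec, sum_mul_sum, mul_mul_mul_comm _ (x _)]
    rw [sum_comm]
    simp_rw [sum_comm (s := univ (α := Fin d → Bool)), ← sum_mul, sum_sign_mul_sign]
    simp [PiLp.inner_apply, mul_sum, mul_comm]
  rw [hsum, inv_mul_cancel_left₀ (by positivity)]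

theorem integral_abs_inner_mul_inner_rademacherMeasure_le (x y : EuclideanSpace ℝ (Fin d)) :
    ∫ v, |⟪v, x⟫ * ⟪v, y⟫| ∂rademacherMeasure d ≤ (‖x‖ ^ 2 + ‖y‖ ^ 2) / 2 := by
  have hAMGM (v : EuclideanSpace ℝ (Fin d)) :
      |⟪v, x⟫ * ⟪v, y⟫| ≤ (⟪v, x⟫ * ⟪v, x⟫ + ⟪v, y⟫ * ⟪v, y⟫) / 2 := by
    rw [abs_mul]
    nlinarith [two_mul_le_add_sq |⟪v, x⟫| |⟪v, y⟫|, sq_abs ⟪v, x⟫, sq_abs ⟪v, y⟫]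
  have hint (z w : EuclideanSpace ℝ (Fin d)) :
      Integrable (fun v => ⟪v, z⟫ * ⟪v, w⟫) (rademacherMeasure d) :=
    integrable_rademacherMeasure (by fun_prop)
  calc ∫ v, |⟪v, x⟫ * ⟪v, y⟫| ∂rademacherMeasure d
      ≤ ∫ v, (⟪v, x⟫ * ⟪v, x⟫ + ⟪v, y⟫ * ⟪v, y⟫) / 2 ∂rademacherMeasure d :=
        integral_mono (integrable_rademacherMeasure (by fun_prop))
          (((hint x x).add (hint y y)).div_const 2) hAMGM
    _ = (‖x‖ ^ 2 + ‖y‖ ^ 2) / 2 := by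
        rw [integral_div, integral_add (hint x x) (hint y y),
          integral_inner_mul_inner_rademacherMeasure, integral_inner_mul_inner_rademacherMeasure,
          real_inner_self_eq_norm_sq, real_inner_self_eq_norm_sq]

end Rademacher

namespace ProbabilityTheory.iIndepFun

variable {Ω E : Type*} [MeasurableSpace Ω] [MeasurableSpace E] {μ : Measure Ω}
  {ω : ℕ → Ω → E} {ν : Measure E} {g : E → ℝ}

theorem integral_prod_range_comp (hind : iIndepFun ω μ) (hmeas : ∀ j, AEMeasurable (ω j) μ)
    (hdist : ∀ j, μ.map (ω j) = ν) (hg : Measurable g) (n : ℕ) :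
    ∫ s, ∏ j ∈ range n, g (ω j s) ∂μ = (∫ v, g v ∂ν) ^ n := by
  have := hind.isProbabilityMeasure
  induction n with
  | zero => simp
  | succ n ih =>
    have hindep := (hind.comp (fun _ => g) fun _ => hg).indepFun_prod_range_succ₀
      (fun j => hg.comp_aemeasurable (hmeas j)) n
    have hgω (j : ℕ) : AEStronglyMeasurable (g ∘ ω j) μ :=
      (hg.comp_aemeasurable (hmeas j)).aestronglyMeasurable
    have hmul := hindep.integral_fun_mul_eq_mul_integral
      (Finset.aestronglyMeasurable_prod _ fun j _ => hgω j) (hgω n)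
    simp only [Finset.prod_apply, Function.comp_apply] at hmul
    rw [← hdist n, integral_map (hmeas n) (hdist n ▸ hg.aestronglyMeasurable)] at ih ⊢
    simp_rw [prod_range_succ]
    rw [hmul, ih, pow_succ]

theorem integrable_prod_range_comp (hind : iIndepFun ω μ) (hmeas : ∀ j, AEMeasurable (ω j) μ)
    (hdist : ∀ j, μ.map (ω j) = ν) (hg : Measurable g) (hgint : Integrable g ν) (n : ℕ) :
    Integrable (fun s => ∏ j ∈ range n, g (ω j s)) μ := by
  have := hind.isProbabilityMeasure
  induction n with
  | zero => simp
  | succ n ih =>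
    have hindep := (hind.comp (fun _ => g) fun _ => hg).indepFun_prod_range_succ₀
      (fun j => hg.comp_aemeasurable (hmeas j)) n
    have hgω (j : ℕ) : Integrable (g ∘ ω j) μ :=
      (integrable_map_measure (hdist j ▸ hg.aestronglyMeasurable) (hmeas j)).1 (hdist j ▸ hgint)
    have hprod : (fun s => ∏ j ∈ range n, g (ω j s)) = ∏ j ∈ range n, g ∘ ω j := by
      ext s; simp [Finset.prod_apply]
    simp_rw [prod_range_succ]
    have hmul := hindep.integrable_mul (hprod ▸ ih) (hgω n)
    rwa [← hprod] at hmul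

end ProbabilityTheory.iIndepFun

theorem Set.iUnion_preimage_singleton {α β : Type*} (f : α → β) : ⋃ y, f ⁻¹' {y} = Set.univ := by
  ext; simp

section Conditioning

variable {Ω β : Type*} [MeasurableSpace Ω] [MeasurableSpace β] {μ : Measure Ω}
  {N : Ω → ℕ} {W : Ω → β} {F : ℕ → β → ℝ}

theorem setIntegral_preimage_singleton_of_indepFun (hN : Measurable N) (hW : AEMeasurable W μ)
    (hNW : IndepFun N W μ) {n : ℕ} (hF : Measurable (F n)) :
    ∫ s in N ⁻¹' {n}, F (N s) (W s) ∂μ = μ.real (N ⁻¹' {n}) * ∫ s, F n (W s) ∂μ := by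
  rw [setIntegral_congr_fun (hN (measurableSet_singleton n)) fun s (hs : N s = n) => by rw [hs]]
  exact Indep.setIntegral_eq_mul hN.comap_le ((IndepFun_iff_Indep N W μ).1 hNW) hW
    ⟨{n}, measurableSet_singleton n, rfl⟩ hF.aestronglyMeasurable

theorem integrable_comp_of_indepFun (hN : Measurable N) (hW : AEMeasurable W μ)
    (hNW : IndepFun N W μ) (hF : ∀ n, Measurable (F n))
    (hFint : ∀ n, Integrable (fun s => F n (W s)) μ)
    (hsum : Summable fun n => μ.real (N ⁻¹' {n}) * ∫ s, |F n (W s)| ∂μ) :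
    Integrable (fun s => F (N s) (W s)) μ := by
  rw [← integrableOn_univ, ← Set.iUnion_preimage_singleton N]
  refine integrableOn_iUnion_of_summable_integral_norm (fun n => ?_) ?_
  · exact (hFint n).integrableOn.congr_fun (fun s (hs : N s = n) => by rw [hs])
      (hN (measurableSet_singleton n))
  · simpa only [Real.norm_eq_abs] using hsum.congr fun n =>
      (setIntegral_preimage_singleton_of_indepFun hN hW hNW (F := fun n w => |F n w|)
        (hF n).abs).symm

theorem integral_comp_eq_tsum_of_indepFun (hN : Measurable N) (hW : AEMeasurable W μ)
    (hNW : IndepFun N W μ) (hF : ∀ n, Measurable (F n))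
    (hFint : ∀ n, Integrable (fun s => F n (W s)) μ)
    (hsum : Summable fun n => μ.real (N ⁻¹' {n}) * ∫ s, |F n (W s)| ∂μ) :
    ∫ s, F (N s) (W s) ∂μ = ∑' n, μ.real (N ⁻¹' {n}) * ∫ s, F n (W s) ∂μ := by
  have hint := integrable_comp_of_indepFun hN hW hNW hF hFint hsum
  rw [← setIntegral_univ, ← Set.iUnion_preimage_singleton N,
    integral_iUnion (fun n => hN (measurableSet_singleton n)) (pairwise_disjoint_fiber N)
      (by rwa [Set.iUnion_preimage_singleton, integrableOn_univ])]
  exact tsum_congr fun n => setIntegral_preimage_singleton_of_indepFun hN hW hNW (hF n)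

end Conditioning

section MaclaurinFeature

variable {E : Type*} [NormedAddCommGroup E] [InnerProductSpace ℝ E]

noncomputable def maclaurinFeature (a : ℕ → ℝ) (n : ℕ) (w : ℕ → E) (x : E) : ℝ :=
  √(a n * 2 ^ (n + 1)) * ∏ j ∈ range n, ⟪w j, x⟫

lemma maclaurinFeature_mul_maclaurinFeature {a : ℕ → ℝ} {n : ℕ} (ha : 0 ≤ a n) (w : ℕ → E)
    (x y : E) :
    maclaurinFeature a n w x * maclaurinFeature a n w y =
      a n * 2 ^ (n + 1) * ∏ j ∈ range n, ⟪w j, x⟫ * ⟪w j, y⟫ := by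
  rw [maclaurinFeature, maclaurinFeature, mul_mul_mul_comm,
    Real.mul_self_sqrt (by positivity), prod_mul_distrib]

variable [MeasurableSpace E] [OpensMeasurableSpace E] {Ω : Type*} [MeasurableSpace Ω]
  {μ : Measure Ω}

theorem integrable_and_integral_maclaurinFeature_mul {a : ℕ → ℝ} (ha : ∀ n, 0 ≤ a n)
    (hsum : Summable a) {N : Ω → ℕ} (hN : Measurable N)
    (hNdist : ∀ n, μ (N ⁻¹' {n}) = 2⁻¹ ^ (n + 1)) {ω : ℕ → Ω → E} (hind : iIndepFun ω μ)
    (hmeas : ∀ j, AEMeasurable (ω j) μ) {ν : Measure E} (hdist : ∀ j, μ.map (ω j) = ν)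
    (hNω : IndepFun N (fun s j => ω j s) μ) {x y : E}
    (hint : Integrable (fun v => ⟪v, x⟫ * ⟪v, y⟫) ν) (habs : ∫ v, |⟪v, x⟫ * ⟪v, y⟫| ∂ν ≤ 1) :
    Integrable (fun s =>
      maclaurinFeature a (N s) (ω · s) x * maclaurinFeature a (N s) (ω · s) y) μ ∧
    ∫ s, maclaurinFeature a (N s) (ω · s) x * maclaurinFeature a (N s) (ω · s) y ∂μ =
      ∑' n, a n * (∫ v, ⟪v, x⟫ * ⟪v, y⟫ ∂ν) ^ n := by
  set F : ℕ → (ℕ → E) → ℝ := fun n w => a n * 2 ^ (n + 1) * ∏ j ∈ range n, ⟪w j, x⟫ * ⟪w j, y⟫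
  have hFeq (s : Ω) : maclaurinFeature a (N s) (ω · s) x * maclaurinFeature a (N s) (ω · s) y =
      F (N s) (ω · s) :=
    maclaurinFeature_mul_maclaurinFeature (ha _) _ x y
  have hP (n : ℕ) : μ.real (N ⁻¹' {n}) = 2⁻¹ ^ (n + 1) := by
    simp [measureReal_def, hNdist]
  have hW : AEMeasurable (fun s j => ω j s) μ := aemeasurable_pi_lambda _ hmeas
  have hF (n : ℕ) : Measurable (F n) := by fun_prop
  have hFint (n : ℕ) : Integrable (fun s => F n (ω · s)) μ :=
    (hind.integrable_prod_range_comp hmeas hdist (g := fun v => ⟪v, x⟫ * ⟪v, y⟫) (by fun_prop)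
      hint n).const_mul _
  have hFintegral (n : ℕ) (g : E → ℝ) (hg : Measurable g) :
      μ.real (N ⁻¹' {n}) * ∫ s, a n * 2 ^ (n + 1) * ∏ j ∈ range n, g (ω j s) ∂μ =
        a n * (∫ v, g v ∂ν) ^ n := by
    rw [hP, integral_const_mul, hind.integral_prod_range_comp hmeas hdist hg]
    have hpow : (2 : ℝ)⁻¹ ^ (n + 1) * 2 ^ (n + 1) = 1 := by rw [← mul_pow]; norm_num
    linear_combination (a n * (∫ v, g v ∂ν) ^ n) * hpow
  have hsumF : Summable fun n => μ.real (N ⁻¹' {n}) * ∫ s, |F n (ω · s)| ∂μ := by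
    have hFabs (n : ℕ) (w : ℕ → E) :
        |F n w| = a n * 2 ^ (n + 1) * ∏ j ∈ range n, |⟪w j, x⟫ * ⟪w j, y⟫| := by
      simp [F, abs_mul, abs_prod, abs_of_nonneg (ha n)]
    have hterm (n : ℕ) : μ.real (N ⁻¹' {n}) * ∫ s, |F n (ω · s)| ∂μ =
        a n * (∫ v, |⟪v, x⟫ * ⟪v, y⟫| ∂ν) ^ n := by
      simp_rw [hFabs]
      exact hFintegral n (fun v => |⟪v, x⟫ * ⟪v, y⟫|) (by fun_prop)
    have habs_nonneg : 0 ≤ ∫ v, |⟪v, x⟫ * ⟪v, y⟫| ∂ν := integral_nonneg fun _ => abs_nonneg _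
    simp_rw [hterm]
    exact Summable.of_nonneg_of_le (fun n => mul_nonneg (ha n) (pow_nonneg habs_nonneg n))
      (fun n => mul_le_of_le_one_right (ha n) (pow_le_one₀ habs_nonneg habs)) hsum
  simp_rw [hFeq]
  exact ⟨integrable_comp_of_indepFun hN hW hNω hF hFint hsumF,
    (integral_comp_eq_tsum_of_indepFun hN hW hNω hF hFint hsumF).trans
      (tsum_congr fun n => hFintegral n (fun v => ⟪v, x⟫ * ⟪v, y⟫) (by fun_prop))⟩

end MaclaurinFeature

theorem rmf_feature_map_unbiased_general
    (d D : ℕ) (hD : 0 < D)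
    {Ω : Type*} [MeasurableSpace Ω] (μ : Measure Ω)
    (a : ℕ → ℝ) (ha : ∀ n, 0 ≤ a n) (hsum : Summable a)
    (N : Fin D → Ω → ℕ) (hN : ∀ t, Measurable (N t))
    (hNdist : ∀ t, ∀ n : ℕ, μ (N t ⁻¹' {n}) = (2 : ENNReal)⁻¹ ^ (n + 1))
    (ω : Fin D → ℕ → Ω → EuclideanSpace ℝ (Fin d))
    (hωindep : ∀ t, iIndepFun (ω t) μ)
    (hωdist : ∀ t j, Measure.map (ω t j) μ = rademacherMeasure d)
    (hNω : ∀ t, IndepFun (N t) (fun s j => ω t j s) μ)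
    (φ : Fin D → EuclideanSpace ℝ (Fin d) → Ω → ℝ)
    (hφ : ∀ t x s, φ t x s =
      Real.sqrt (a (N t s) * 2 ^ (N t s + 1)) *
        ∏ j ∈ Finset.range (N t s), (inner ℝ (ω t j s) x : ℝ))
    (Φ : EuclideanSpace ℝ (Fin d) → Ω → EuclideanSpace ℝ (Fin D))
    (hΦ : ∀ x s t, Φ x s t = (Real.sqrt D)⁻¹ * φ t x s)
    (x y : EuclideanSpace ℝ (Fin d)) (hx : ‖x‖ ≤ 1) (hy : ‖y‖ ≤ 1) :
    ∫ s, (inner ℝ (Φ x s) (Φ y s) : ℝ) ∂μ = ∑' n : ℕ, a n * (inner ℝ x y : ℝ) ^ n := by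
  have hfeature (t : Fin D) : Integrable (fun s => φ t x s * φ t y s) μ ∧
      ∫ s, φ t x s * φ t y s ∂μ = ∑' n, a n * ⟪x, y⟫ ^ n := by
    have hmeas (j : ℕ) : AEMeasurable (ω t j) μ :=
      .of_map_ne_zero (hωdist t j ▸ IsProbabilityMeasure.ne_zero _)
    have habs : ∫ v, |⟪v, x⟫ * ⟪v, y⟫| ∂rademacherMeasure d ≤ 1 :=
      (integral_abs_inner_mul_inner_rademacherMeasure_le x y).trans
        (by nlinarith [norm_nonneg x, norm_nonneg y])
    have hφ' : φ t = fun x s => maclaurinFeature a (N t s) (ω t · s) x := by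
      ext x s; exact hφ t x s
    rw [hφ', ← integral_inner_mul_inner_rademacherMeasure x y]
    exact integrable_and_integral_maclaurinFeature_mul ha hsum (hN t) (hNdist t) (hωindep t) hmeas
      (hωdist t) (hNω t) (integrable_rademacherMeasure (by fun_prop)) habs
  have hinner (s : Ω) : ⟪Φ x s, Φ y s⟫ = (D : ℝ)⁻¹ * ∑ t, φ t x s * φ t y s := by
    simp only [PiLp.inner_apply, hΦ, mul_sum, RCLike.inner_apply, conj_trivial]
    refine sum_congr rfl fun t _ => ?_
    rw [mul_mul_mul_comm, ← mul_inv, Real.mul_self_sqrt D.cast_nonneg, mul_comm (φ t y s)]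
  calc ∫ s, ⟪Φ x s, Φ y s⟫ ∂μ = (D : ℝ)⁻¹ * ∑ t, ∫ s, φ t x s * φ t y s ∂μ := by
        simp_rw [hinner]
        rw [integral_const_mul, integral_finsetSum _ fun t _ => (hfeature t).1]
    _ = ∑' n, a n * ⟪x, y⟫ ^ n := by
        simp [(hfeature _).2, hD.ne']

/-- Unbiasedness of the `D`-dimensional Random Maclaurin Feature map (with `p = 2`):
with `D` independent copies `φ t` of the single random Maclaurin feature, each built from its
own `N t` with `P[N t = n] = 2^{-(n+1)}` and its own i.i.d. Rademacher vectors `ω t j`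
independent of `N t`, and `Φ x = D^{-1/2} (φ 1 x, …, φ D x)`, one has, for `‖x‖₂ ≤ 1` and
`‖y‖₂ ≤ 1`, `E[Φ(x) ⬝ Φ(y)] = ∑ n, a n ⟨x, y⟩^n`. -/
theorem rmf_feature_map_unbiased
    (d D : ℕ) (hd : 0 < d) (hD : 0 < D)
    {Ω : Type*} [MeasurableSpace Ω] (μ : Measure Ω) [IsProbabilityMeasure μ]
    (a : ℕ → ℝ) (ha : ∀ n, 0 ≤ a n) (hsum : Summable a)
    (N : Fin D → Ω → ℕ) (hN : ∀ t, Measurable (N t))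
    (hNdist : ∀ t, ∀ n : ℕ, μ (N t ⁻¹' {n}) = (2 : ENNReal)⁻¹ ^ (n + 1))
    (ω : Fin D → ℕ → Ω → EuclideanSpace ℝ (Fin d))
    (hωindep : ∀ t, iIndepFun (ω t) μ)
    (hωdist : ∀ t j, Measure.map (ω t j) μ = rademacherMeasure d)
    (hNω : ∀ t, IndepFun (N t) (fun s j => ω t j s) μ)
    (hcopies : iIndepFun
      (fun t s => ((N t s, fun j => ω t j s) : ℕ × (ℕ → EuclideanSpace ℝ (Fin d)))) μ)
    (φ : Fin D → EuclideanSpace ℝ (Fin d) → Ω → ℝ)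
    (hφ : ∀ t x s, φ t x s =
      Real.sqrt (a (N t s) * 2 ^ (N t s + 1)) *
        ∏ j ∈ Finset.range (N t s), (inner ℝ (ω t j s) x : ℝ))
    (Φ : EuclideanSpace ℝ (Fin d) → Ω → EuclideanSpace ℝ (Fin D))
    (hΦ : ∀ x s t, Φ x s t = (Real.sqrt D)⁻¹ * φ t x s)
    (x y : EuclideanSpace ℝ (Fin d)) (hx : ‖x‖ ≤ 1) (hy : ‖y‖ ≤ 1) :
    ∫ s, (inner ℝ (Φ x s) (Φ y s) : ℝ) ∂μ = ∑' n : ℕ, a n * (inner ℝ x y : ℝ) ^ n :=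
  rmf_feature_map_unbiased_general d D hD μ a ha hsum N hN hNdist ω hωindep hωdist hNω φ hφ Φ hΦ x y
    hx hy
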